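/- In the Wilson case (φ(x) = 2x, γ = 1), the function φ_M admits the product formula φ_M(x) = ∏_{1≤j<k≤M} ( η(x_j^{(M)}) - η(x_k^{(M)}) ) / φ(i·j/2), where η(x) = x², x_j^{(M)} = x + i((M+1)/2 - j), and φ_M(x) := (2x)^{⌊M/2⌋} ∏_{k=1}^{M-2} ( 2(x - ik/2) · 2(x + ik/2) )^{⌊(M-k)/2⌋}. -/

import Mathlib

/-!
Since `x_j - x_k = i (k - j)` and `x_j + x_k = 2x + i (M + 1 - j - k)`, the `(j, k)` factor equals
`((k - j) / j) (2x + i (M + 1 - j - k))`. The factors `(k - j) / j` multiply to `1`, because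
`(j, k) ↦ (k - j, k)` permutes the pairs `1 ≤ j < k ≤ M`. The remaining product obeys the same
two-step recursion as `φ_M`: going from `M` to `M + 2` adds the pairs containing `1` or `M + 2`,
which contribute `2x ∏_{k=1}^{M} (2x - ik)(2x + ik)`.
-/

/-- The auxiliary function `φ_M` in the Wilson case (`φ(x) = 2x`, `γ = 1`):
`φ_M(x) = (2x)^⌊M/2⌋ ∏_{k=1}^{M-2} (2(x - ik/2) · 2(x + ik/2))^⌊(M-k)/2⌋`,
with `φ_0 = φ_1 = 1`. -/
noncomputable def phiM (M : ℕ) (x : ℂ) : ℂ :=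
  (2 * x) ^ (M / 2) *
    ∏ k ∈ Finset.Icc 1 (M - 2),
      ((2 * (x - Complex.I * (k : ℂ) / 2)) * (2 * (x + Complex.I * (k : ℂ) / 2))) ^ ((M - k) / 2)

open Finset Complex

section Pairs

variable {α : Type*} [CommMonoid α]

theorem prod_Icc_add_one_add_one (f : ℕ → α) (a b : ℕ) :
    ∏ k ∈ Icc (a + 1) (b + 1), f k = ∏ k ∈ Icc a b, f (k + 1) := by
  rw [← map_add_right_Icc, prod_map]
  rfl

theorem prod_pairs_succ_top (g : ℕ → ℕ → α) (N : ℕ) :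
    ∏ j ∈ Icc 1 (N + 1), ∏ k ∈ Icc (j + 1) (N + 1), g j k =
      (∏ j ∈ Icc 1 N, ∏ k ∈ Icc (j + 1) N, g j k) * ∏ j ∈ Icc 1 N, g j (N + 1) := by
  rw [prod_Icc_succ_top (by omega), Icc_eq_empty_of_lt (Nat.lt_succ_self _), prod_empty,
    mul_one, ← prod_mul_distrib]
  refine prod_congr rfl fun j hj => prod_Icc_succ_top ?_ _
  grind

theorem prod_pairs_succ_bot (g : ℕ → ℕ → α) (N : ℕ) :
    ∏ j ∈ Icc 1 (N + 1), ∏ k ∈ Icc (j + 1) (N + 1), g j k =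
      (∏ k ∈ Icc 1 N, g 1 (k + 1)) * ∏ j ∈ Icc 1 N, ∏ k ∈ Icc (j + 1) N, g (j + 1) (k + 1) := by
  rw [← insert_Icc_add_one_left_eq_Icc (by omega), prod_insert (by simp),
    prod_Icc_add_one_add_one, prod_Icc_add_one_add_one]
  congr 1
  exact prod_congr rfl fun j _ => prod_Icc_add_one_add_one _ _ _

theorem prod_pairs_add_two (g : ℕ → ℕ → α) (M : ℕ) :
    ∏ j ∈ Icc 1 (M + 2), ∏ k ∈ Icc (j + 1) (M + 2), g j k =
      (∏ j ∈ Icc 1 M, ∏ k ∈ Icc (j + 1) M, g (j + 1) (k + 1)) *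
        (g 1 (M + 2) * (∏ k ∈ Icc 1 M, g 1 (k + 1)) * ∏ j ∈ Icc 1 M, g (j + 1) (M + 2)) := by
  rw [prod_pairs_succ_bot, prod_pairs_succ_top, prod_Icc_succ_top (by omega)]
  ac_rfl

theorem prod_pairs_comp_sub (f : ℕ → α) (M : ℕ) :
    ∏ j ∈ Icc 1 M, ∏ k ∈ Icc (j + 1) M, f (k - j) = ∏ j ∈ Icc 1 M, ∏ _k ∈ Icc (j + 1) M, f j := by
  rw [prod_sigma', prod_sigma']
  refine prod_nbij' (fun p => ⟨p.2 - p.1, p.2⟩) (fun p => ⟨p.2 - p.1, p.2⟩) ?_ ?_ ?_ ?_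
    fun _ _ => rfl
  all_goals rintro ⟨j, k⟩
  all_goals simp only [mem_sigma, mem_Icc, Sigma.mk.injEq, heq_eq_eq, and_true]
  all_goals omega

end Pairs

theorem prod_pairs_sub_div_eq_one {K : Type*} [Field K] [CharZero K] (M : ℕ) :
    ∏ j ∈ Icc 1 M, ∏ k ∈ Icc (j + 1) M, ((k : K) - j) / j = 1 := by
  have hcast : ∀ j ∈ Icc 1 M, ∀ k ∈ Icc (j + 1) M, ((k : K) - j) / j = ((k - j : ℕ) : K) / j :=
    fun j _ k hk => by rw [Nat.cast_sub (by simp only [mem_Icc] at hk; omega)]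
  have hne : ∏ j ∈ Icc 1 M, ∏ _k ∈ Icc (j + 1) M, (j : K) ≠ 0 :=
    prod_ne_zero_iff.2 fun j hj => prod_ne_zero_iff.2 fun _ _ =>
      Nat.cast_ne_zero.2 (by simp only [mem_Icc] at hj; omega)
  rw [prod_congr rfl fun j hj => prod_congr rfl (hcast j hj)]
  simp_rw [prod_div_distrib]
  rw [prod_pairs_comp_sub (fun n => (n : K)), div_self hne]

theorem phiM_add_two (M : ℕ) (x : ℂ) :
    phiM (M + 2) x = phiM M x * (2 * x * ∏ k ∈ Icc 1 M, (2 * x - I * k) * (2 * x + I * k)) := by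
  rw [phiM, phiM, Nat.add_sub_cancel]
  set a : ℕ → ℂ := fun k => 2 * (x - I * k / 2) * (2 * (x + I * k / 2))
  have hextend : ∏ k ∈ Icc 1 (M - 2), a k ^ ((M - k) / 2) = ∏ k ∈ Icc 1 M, a k ^ ((M - k) / 2) :=
    prod_subset (Icc_subset_Icc_right (Nat.sub_le _ _)) fun k hk hk' => by
      simp only [mem_Icc] at hk hk'
      rw [show (M - k) / 2 = 0 by omega, pow_zero]
  have hsucc : ∀ k ∈ Icc 1 M, a k ^ ((M + 2 - k) / 2) = a k ^ ((M - k) / 2) * a k := by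
    intro k hk
    rw [← pow_succ]
    congr 1
    simp only [mem_Icc] at hk
    omega
  have hfactor : ∀ k ∈ Icc 1 M, a k = (2 * x - I * k) * (2 * x + I * k) := fun k _ => by ring
  rw [prod_congr rfl hsucc, prod_mul_distrib, ← hextend, prod_congr rfl hfactor,
    show (M + 2) / 2 = M / 2 + 1 by omega, pow_succ]
  ring

theorem phiM_eq_prod_pairs :
    ∀ (M : ℕ) (x : ℂ),
      phiM M x = ∏ j ∈ Icc 1 M, ∏ k ∈ Icc (j + 1) M, (2 * x + I * ((M : ℂ) + 1 - j - k))
  | 0, x => by simp [phiM]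
  | 1, x => by simp [phiM]
  | M + 2, x => by
    have hreflect :
        ∏ k ∈ Icc 1 M, (2 * x + I * (((M + 2 : ℕ) : ℂ) + 1 - ((1 : ℕ) : ℂ) - ((k + 1 : ℕ) : ℂ))) =
          ∏ k ∈ Icc 1 M, (2 * x + I * k) := by
      refine prod_nbij' (fun k => M + 1 - k) (fun k => M + 1 - k) ?_ ?_ ?_ ?_ ?_
      all_goals intro k hk
      all_goals simp only [mem_Icc] at hk ⊢
      all_goals try omega
      push_cast [Nat.cast_sub (show k ≤ M + 1 by omega)]
      ring
    rw [phiM_add_two, phiM_eq_prod_pairs M, prod_pairs_add_two, hreflect]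
    congr 1
    · exact prod_congr rfl fun j _ => prod_congr rfl fun k _ => by push_cast; ring
    · have hcentre :
          2 * x + I * (((M + 2 : ℕ) : ℂ) + 1 - ((1 : ℕ) : ℂ) - ((M + 2 : ℕ) : ℂ)) = 2 * x := by
        push_cast; ring
      have hlast : ∀ j ∈ Icc 1 M,
          2 * x + I * (((M + 2 : ℕ) : ℂ) + 1 - ((j + 1 : ℕ) : ℂ) - ((M + 2 : ℕ) : ℂ)) =
            2 * x - I * j :=
        fun j _ => by push_cast; ring
      rw [hcentre, prod_congr rfl hlast, prod_mul_distrib]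
      ring

theorem sq_sub_sq_div_eq (M j k : ℕ) (x : ℂ) (hj : j ≠ 0) :
    ((x + I * (((M : ℂ) + 1) / 2 - j)) ^ 2 - (x + I * (((M : ℂ) + 1) / 2 - k)) ^ 2) /
        (2 * (I * j / 2)) =
      ((k : ℂ) - j) / j * (2 * x + I * ((M : ℂ) + 1 - j - k)) := by
  have hj' : (j : ℂ) ≠ 0 := Nat.cast_ne_zero.2 hj
  field_simp
  ring

/-- Product formula for `φ_M` in the Wilson case (`η(x) = x²`, `φ(x) = 2x`, `γ = 1`,
`x_j^{(M)} = x + i((M+1)/2 - j)`):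
`φ_M(x) = ∏_{1 ≤ j < k ≤ M} (η(x_j^{(M)}) - η(x_k^{(M)})) / φ(i j/2)`. -/
theorem phiM_prod_formula (M : ℕ) (x : ℂ) :
    phiM M x =
      ∏ j ∈ Finset.Icc 1 M, ∏ k ∈ Finset.Icc (j + 1) M,
        ((x + Complex.I * (((M : ℂ) + 1) / 2 - (j : ℂ))) ^ 2 -
            (x + Complex.I * (((M : ℂ) + 1) / 2 - (k : ℂ))) ^ 2) /
          (2 * (Complex.I * (j : ℂ) / 2)) := by
  rw [prod_congr rfl fun j hj => prod_congr rfl fun k _ =>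
    sq_sub_sq_div_eq M j k x (Nat.one_le_iff_ne_zero.1 (mem_Icc.1 hj).1)]
  simp_rw [prod_mul_distrib]
  rw [prod_pairs_sub_div_eq_one, one_mul, phiM_eq_prod_pairs]
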